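/- arXiv:1207.6667 — 5 statements merged into one kernel-verified Lean document; each statement's English description precedes it below -/
import Mathlib

section
/- The first-best contract menu is not incentive compatible: let c > 0, 2c·ln 2 < θ̲ < θ̄, and define γ_fb(θ) = θ/(2c·ln 2) − 1 and t_fb(θ) = 1/(2·ln 2) − c/θ on [θ̲, θ̄]. Then for every type θ ∈ (θ̲, θ̄] there exists an announced type θ̂ ∈ [θ̲, θ) such that t_fb(θ̂) − c·γ_fb(θ̂)/θ > t_fb(θ) − c·γ_fb(θ)/θ, i.e., type θ strictly profits from misreporting a lower type. -/
/-!
Against the first-best menu, type `θ` gains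
`(θ - θ̂) (θ̂ - 2c ln 2) / (2 ln 2 · θ θ̂)` by announcing `θ̂` instead of `θ`.
This is positive for every `θ̂ ∈ (2c ln 2, θ)`, in particular for `θ̂ = θ̲`.
-/

section FirstBest

variable {c L θ θhat : ℝ}

theorem firstBest_misreport_gain (hc : c ≠ 0) (hL : L ≠ 0) (hθ : θ ≠ 0) (hθhat : θhat ≠ 0) :
    ((1 / (2 * L) - c / θhat) - c * (θhat / (2 * c * L) - 1) / θ)
      - ((1 / (2 * L) - c / θ) - c * (θ / (2 * c * L) - 1) / θ)
      = (θ - θhat) * (θhat - 2 * c * L) / (2 * L * θ * θhat) := by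
  field_simp
  ring

theorem firstBest_misreport_gain_pos (hc : 0 < c) (hL : 0 < L) (hlow : 2 * c * L < θhat)
    (hlt : θhat < θ) :
    0 < ((1 / (2 * L) - c / θhat) - c * (θhat / (2 * c * L) - 1) / θ)
      - ((1 / (2 * L) - c / θ) - c * (θ / (2 * c * L) - 1) / θ) := by
  have hθhat : 0 < θhat := lt_trans (by positivity) hlow
  have hθ : 0 < θ := hθhat.trans hlt
  rw [firstBest_misreport_gain hc.ne' hL.ne' hθ.ne' hθhat.ne']
  have := sub_pos.mpr hlt
  have := sub_pos.mpr hlow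
  positivity

end FirstBest

theorem first_best_not_incentive_compatible_general
    (c θl θh : ℝ) (hc : 0 < c) (hl : 2 * c * Real.log 2 < θl)
    (γfb tfb : ℝ → ℝ)
    (hγfb : ∀ θ, γfb θ = θ / (2 * c * Real.log 2) - 1)
    (htfb : ∀ θ, tfb θ = 1 / (2 * Real.log 2) - c / θ) :
    ∀ θ ∈ Set.Ioc θl θh, ∃ θhat ∈ Set.Ico θl θ,
      tfb θhat - c * γfb θhat / θ > tfb θ - c * γfb θ / θ := by
  intro θ ⟨hlθ, _⟩
  refine ⟨θl, ⟨le_rfl, hlθ⟩, ?_⟩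
  rw [hγfb, hγfb, htfb, htfb, gt_iff_lt, ← sub_pos]
  exact firstBest_misreport_gain_pos hc (Real.log_pos one_lt_two) hl hlθ

/-- The first-best contract menu `γ_fb(θ) = θ/(2c·ln 2) − 1`,
`t_fb(θ) = 1/(2·ln 2) − c/θ` on `[θ̲, θ̄]` is not incentive compatible:
every type `θ ∈ (θ̲, θ̄]` strictly profits from misreporting some lower
type `θ̂ ∈ [θ̲, θ)`. -/
theorem first_best_not_incentive_compatible
    (c θl θh : ℝ) (hc : 0 < c) (hl : 2 * c * Real.log 2 < θl) (hlh : θl < θh)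
    (γfb tfb : ℝ → ℝ)
    (hγfb : ∀ θ, γfb θ = θ / (2 * c * Real.log 2) - 1)
    (htfb : ∀ θ, tfb θ = 1 / (2 * Real.log 2) - c / θ) :
    ∀ θ ∈ Set.Ioc θl θh, ∃ θhat ∈ Set.Ico θl θ,
      tfb θhat - c * γfb θhat / θ > tfb θ - c * γfb θ / θ :=
  first_best_not_incentive_compatible_general c θl θh hc hl γfb tfb hγfb htfb
end

section
/- Integral formula for the transfers: let γ, t : [θ̲, θ̄] → ℝ be continuously differentiable, satisfy t′(θ) = (c/θ)·γ′(θ) on (θ̲, θ̄), and satisfy the binding participation constraint at the lowest type, t(θ̲) − c·γ(θ̲)/θ̲ = 0. Then for every θ ∈ [θ̲, θ̄], t(θ) = c·γ(θ)/θ + ∫_{θ̲}^{θ} c·γ(τ)/τ² dτ. -/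
open intervalIntegral Set

/-
The information rent `ρ(θ) = t(θ) - c γ(θ)/θ` has derivative `t' - c γ'/θ + c γ/θ²`, and the
first-order condition `t' = (c/θ) γ'` cancels the first two terms, so `ρ' = c γ/θ²`. Integrating
from `θ̲`, where the participation constraint makes `ρ` vanish, gives the formula.
-/

lemma hasDerivAt_sub_const_mul_div {c x γ' : ℝ} {γ t : ℝ → ℝ} (hx : x ≠ 0)
    (hγ : HasDerivAt γ γ' x) (ht : HasDerivAt t (c / x * γ') x) :
    HasDerivAt (fun y => t y - c * γ y / y) (c * γ x / x ^ 2) x := by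
  have hquot : HasDerivAt (fun y => c * γ y / y) ((c * γ' * x - c * γ x * 1) / x ^ 2) x :=
    (hγ.const_mul c).div (hasDerivAt_id x) hx
  refine (ht.sub hquot).congr_deriv ?_
  field_simp
  ring

lemma integral_const_mul_div_sq_eq_sub {a b c : ℝ} {γ t : ℝ → ℝ} (ha : 0 < a) (hab : a ≤ b)
    (hγc : ContinuousOn γ (Icc a b)) (htc : ContinuousOn t (Icc a b))
    (hγd : ∀ x ∈ Ioo a b, DifferentiableAt ℝ γ x)
    (ht' : ∀ x ∈ Ioo a b, HasDerivAt t (c / x * deriv γ x) x) :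
    ∫ τ in a..b, c * γ τ / τ ^ 2 = (t b - c * γ b / b) - (t a - c * γ a / a) := by
  have hne : ∀ x ∈ Icc a b, x ≠ 0 := fun x hx => (ha.trans_le hx.1).ne'
  refine integral_eq_sub_of_hasDerivAt_of_le hab
    (htc.sub ((continuousOn_const.mul hγc).div continuousOn_id hne))
    (fun x hx => hasDerivAt_sub_const_mul_div (hne x (Ioo_subset_Icc_self hx))
      (hγd x hx).hasDerivAt (ht' x hx)) ?_
  exact ((continuousOn_const.mul hγc).div (continuousOn_id.pow 2)
    fun x hx => pow_ne_zero 2 (hne x hx)).intervalIntegrable_of_Icc hab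

lemma ContDiffOn.differentiableAt_of_mem_Ioo {f : ℝ → ℝ} {a b x : ℝ}
    (hf : ContDiffOn ℝ 1 f (Icc a b)) (hx : x ∈ Ioo a b) : DifferentiableAt ℝ f x :=
  (hf.differentiableOn one_ne_zero x (Ioo_subset_Icc_self hx)).differentiableAt
    (Icc_mem_nhds hx.1 hx.2)

theorem transfer_integral_formula_general
    (c θl θh : ℝ) (hθl : 0 < θl)
    (γ t : ℝ → ℝ)
    (hγ : ContDiffOn ℝ 1 γ (Set.Icc θl θh))
    (ht : ContDiffOn ℝ 1 t (Set.Icc θl θh))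
    (hFOC : ∀ θ ∈ Set.Ioo θl θh, deriv t θ = (c / θ) * deriv γ θ)
    (hIRbind : t θl - c * γ θl / θl = 0) :
    ∀ θ ∈ Set.Icc θl θh,
      t θ = c * γ θ / θ + ∫ τ in θl..θ, c * γ τ / τ ^ 2 := by
  intro θ hθ
  have hsub : Icc θl θ ⊆ Icc θl θh := Icc_subset_Icc_right hθ.2
  have hIoo : Ioo θl θ ⊆ Ioo θl θh := Ioo_subset_Ioo_right hθ.2
  have hrent := integral_const_mul_div_sq_eq_sub hθl hθ.1
    (hγ.continuousOn.mono hsub) (ht.continuousOn.mono hsub)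
    (fun x hx => hγ.differentiableAt_of_mem_Ioo (hIoo hx))
    (fun x hx => hFOC x (hIoo hx) ▸ (ht.differentiableAt_of_mem_Ioo (hIoo hx)).hasDerivAt)
  rw [hrent, hIRbind]
  ring

/-- Integral formula for the transfers: if `γ, t` are continuously
differentiable on `[θ̲, θ̄]`, satisfy the first-order incentive condition
`t′(θ) = (c/θ)·γ′(θ)` on the interior, and the participation constraint
binds at the lowest type (`t(θ̲) = c·γ(θ̲)/θ̲`), then
`t(θ) = c·γ(θ)/θ + ∫_{θ̲}^{θ} c·γ(τ)/τ² dτ` for every `θ ∈ [θ̲, θ̄]`. -/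
theorem transfer_integral_formula
    (c θl θh : ℝ) (hc : 0 < c) (hθl : 0 < θl) (hlh : θl < θh)
    (γ t : ℝ → ℝ)
    (hγ : ContDiffOn ℝ 1 γ (Set.Icc θl θh))
    (ht : ContDiffOn ℝ 1 t (Set.Icc θl θh))
    (hFOC : ∀ θ ∈ Set.Ioo θl θh, deriv t θ = (c / θ) * deriv γ θ)
    (hIRbind : t θl - c * γ θl / θl = 0) :
    ∀ θ ∈ Set.Icc θl θh,
      t θ = c * γ θ / θ + ∫ τ in θl..θ, c * γ τ / τ ^ 2 :=
  transfer_integral_formula_general c θl θh hθl γ t hγ ht hFOC hIRbind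
end

section
/- Bounds from binding adjacent incentive constraints: let c > 0, types 0 < δ₁ < ⋯ < δ_K, and let (γ_k, t_k) satisfy 0 ≤ γ₁ ≤ γ₂ ≤ ⋯ ≤ γ_K together with the binding downward adjacent incentive constraints t_k − t_{k−1} = c(γ_k − γ_{k−1})/δ_k for all k ≥ 2. Then for all indices j > k one has t_j − t_k ≤ c(γ_j − γ_k)/δ_k, and for all indices j < k one has t_k − t_j ≥ c(γ_k − γ_j)/δ_k. -/
theorem sub_le_sub_of_forall_succ_sub_le {α : Type*} [AddCommGroup α] [PartialOrder α]
    [IsOrderedAddMonoid α] {f g : ℕ → α} {m n : ℕ} (hmn : m ≤ n)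
    (h : ∀ i, m ≤ i → i < n → f (i + 1) - f i ≤ g (i + 1) - g i) :
    f n - f m ≤ g n - g m := by
  induction n, hmn using Nat.le_induction with
  | base => simp
  | succ n hmn ih =>
    calc f (n + 1) - f m = (f (n + 1) - f n) + (f n - f m) := by abel
      _ ≤ (g (n + 1) - g n) + (g n - g m) :=
        add_le_add (h n hmn n.lt_succ_self) (ih fun i hmi hin => h i hmi (by omega))
      _ = g (n + 1) - g m := by abel

theorem binding_adjacent_IC_bounds_general
    (c : ℝ) (hc : 0 < c) (K : ℕ)
    (δ γ t : ℕ → ℝ)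
    (hδpos : ∀ k, k < K → 0 < δ k)
    (hδmono : ∀ j k, j < k → k < K → δ j < δ k)
    (hγmono : ∀ j k, j ≤ k → k < K → γ j ≤ γ k)
    (hbind : ∀ k, 1 ≤ k → k < K →
      t k - t (k - 1) = c * (γ k - γ (k - 1)) / δ k) :
    (∀ k j, k < j → j < K → t j - t k ≤ c * (γ j - γ k) / δ k) ∧
    (∀ k j, j < k → k < K → t k - t j ≥ c * (γ k - γ j) / δ k) := by
  have hδle : ∀ j k, j ≤ k → k < K → δ j ≤ δ k := fun j k hjk hk =>
    hjk.eq_or_lt.elim (fun h => h ▸ le_rfl) fun h => (hδmono j k h hk).le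
  have hstep : ∀ i, i + 1 < K → t (i + 1) - t i = c * (γ (i + 1) - γ i) / δ (i + 1) :=
    fun i hi => by simpa using hbind (i + 1) (by omega) hi
  have hgain : ∀ i, i + 1 < K → 0 ≤ c * (γ (i + 1) - γ i) := fun i hi =>
    mul_nonneg hc.le (sub_nonneg.2 (hγmono i (i + 1) i.le_succ hi))
  have hlin : ∀ d a b, c * γ a / d - c * γ b / d = c * (γ a - γ b) / d := by intros; ring
  -- Compare `t` step by step with the linear schedule `i ↦ c γ_i / δ_k`.
  constructor
  · intro k j hkj hjK
    have := sub_le_sub_of_forall_succ_sub_le (g := fun i => c * γ i / δ k) hkj.le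
      fun i hki hij => by
        rw [hstep i (by omega), hlin]
        exact div_le_div_of_nonneg_left (hgain i (by omega)) (hδpos k (by omega))
          (hδle k (i + 1) (by omega) (by omega))
    simpa only [hlin] using this
  · intro k j hjk hkK
    have := sub_le_sub_of_forall_succ_sub_le (f := fun i => c * γ i / δ k) (g := t) hjk.le
      fun i hji hik => by
        rw [hstep i (by omega), hlin]
        exact div_le_div_of_nonneg_left (hgain i (by omega)) (hδpos (i + 1) (by omega))
          (hδle (i + 1) k (by omega) hkK)
    simpa only [hlin, ge_iff_le] using this

/-- Bounds from binding adjacent incentive constraints: if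
`0 ≤ γ_0 ≤ ⋯ ≤ γ_{K-1}` and the downward adjacent incentive constraints
are binding, `t_k − t_{k−1} = c(γ_k − γ_{k−1})/δ_k`, then for `j > k`,
`t_j − t_k ≤ c(γ_j − γ_k)/δ_k`, and for `j < k`,
`t_k − t_j ≥ c(γ_k − γ_j)/δ_k`. -/
theorem binding_adjacent_IC_bounds
    (c : ℝ) (hc : 0 < c) (K : ℕ) (hK : 0 < K)
    (δ γ t : ℕ → ℝ)
    (hδpos : ∀ k, k < K → 0 < δ k)
    (hδmono : ∀ j k, j < k → k < K → δ j < δ k)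
    (hγ0 : ∀ k, k < K → 0 ≤ γ k)
    (hγmono : ∀ j k, j ≤ k → k < K → γ j ≤ γ k)
    (hbind : ∀ k, 1 ≤ k → k < K →
      t k - t (k - 1) = c * (γ k - γ (k - 1)) / δ k) :
    (∀ k j, k < j → j < K → t j - t k ≤ c * (γ j - γ k) / δ k) ∧
    (∀ k j, j < k → k < K → t k - t j ≥ c * (γ k - γ j) / δ k) :=
  binding_adjacent_IC_bounds_general c hc K δ γ t hδpos hδmono hγmono hbind
end

section
/- (Theorem 2, sufficiency.) Let c > 0 and types 0 < δ₁ < ⋯ < δ_K. If a contract menu (γ_k, t_k) satisfies 0 ≤ γ₁ ≤ γ₂ ≤ ⋯ ≤ γ_K and all binding downward adjacent incentive constraints t_k − t_{k−1} = c(γ_k − γ_{k−1})/δ_k for k ≥ 2, then the menu is fully incentive compatible: t_k − cγ_k/δ_k ≥ t_j − cγ_j/δ_k for all pairs of indices k, j. -/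
/-!
For a fixed type `k`, look at the payoff `i ↦ t i - c γ i / δ k` of taking contract `i`. Under the
binding adjacent constraints its increment from `i` to `i + 1` is
`c (γ (i+1) - γ i) (1 / δ (i+1) - 1 / δ k)`, which is `≥ 0` while `δ (i+1) ≤ δ k` and `≤ 0` once
`δ k ≤ δ (i+1)`. So the payoff is single-peaked at `i = k`, which is incentive compatibility.
-/

/-- The payoff of type `δ k` from choosing contract `(γ i, t i)` of the menu. -/
noncomputable def menuPayoff (c : ℝ) (δ γ t : ℕ → ℝ) (k i : ℕ) : ℝ :=
  t i - c * γ i / δ k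

section

variable {c : ℝ} {δ γ t : ℕ → ℝ} {k i K : ℕ}

lemma menuPayoff_succ_sub (hbind : t (i + 1) - t i = c * (γ (i + 1) - γ i) / δ (i + 1)) :
    menuPayoff c δ γ t k (i + 1) - menuPayoff c δ γ t k i =
      c * (γ (i + 1) - γ i) * ((δ (i + 1))⁻¹ - (δ k)⁻¹) := by
  unfold menuPayoff
  linear_combination hbind

lemma menuPayoff_le_succ (hc : 0 ≤ c) (hγ : γ i ≤ γ (i + 1)) (hδ : 0 < δ (i + 1))
    (hδk : δ (i + 1) ≤ δ k) (hbind : t (i + 1) - t i = c * (γ (i + 1) - γ i) / δ (i + 1)) :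
    menuPayoff c δ γ t k i ≤ menuPayoff c δ γ t k (i + 1) := by
  rw [← sub_nonneg, menuPayoff_succ_sub hbind]
  exact mul_nonneg (mul_nonneg hc (sub_nonneg.2 hγ)) (sub_nonneg.2 (inv_anti₀ hδ hδk))

lemma menuPayoff_succ_le (hc : 0 ≤ c) (hγ : γ i ≤ γ (i + 1)) (hδ : 0 < δ k)
    (hδk : δ k ≤ δ (i + 1)) (hbind : t (i + 1) - t i = c * (γ (i + 1) - γ i) / δ (i + 1)) :
    menuPayoff c δ γ t k (i + 1) ≤ menuPayoff c δ γ t k i := by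
  rw [← sub_nonpos, menuPayoff_succ_sub hbind]
  exact mul_nonpos_of_nonneg_of_nonpos (mul_nonneg hc (sub_nonneg.2 hγ))
    (sub_nonpos.2 (inv_anti₀ hδ hδk))

lemma monotoneOn_menuPayoff (hc : 0 ≤ c) (hδ : MonotoneOn δ (Set.Iio K))
    (hγ : MonotoneOn γ (Set.Iio K))
    (hbind : ∀ i, i + 1 < K → t (i + 1) - t i = c * (γ (i + 1) - γ i) / δ (i + 1))
    (hδpos : ∀ i < K, 0 < δ i) (hk : k < K) :
    MonotoneOn (menuPayoff c δ γ t k) (Set.Iic k) := by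
  refine monotoneOn_of_le_succ Set.ordConnected_Iic fun i _ _ hi ↦ ?_
  rw [Set.mem_Iic, Order.succ_eq_add_one] at hi
  rw [Order.succ_eq_add_one]
  have hiK : i + 1 < K := hi.trans_lt hk
  have hiK' : i ∈ Set.Iio K := (Nat.lt_succ_self i).trans hiK
  exact menuPayoff_le_succ hc (hγ hiK' hiK (Nat.le_succ i)) (hδpos _ hiK) (hδ hiK hk hi)
    (hbind i hiK)

lemma antitoneOn_menuPayoff (hc : 0 ≤ c) (hδ : MonotoneOn δ (Set.Iio K))
    (hγ : MonotoneOn γ (Set.Iio K))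
    (hbind : ∀ i, i + 1 < K → t (i + 1) - t i = c * (γ (i + 1) - γ i) / δ (i + 1))
    (hδk : 0 < δ k) :
    AntitoneOn (menuPayoff c δ γ t k) (Set.Ico k K) := by
  refine antitoneOn_of_succ_le Set.ordConnected_Ico fun i _ hi hi' ↦ ?_
  rw [Order.succ_eq_add_one, Set.mem_Ico] at hi'
  rw [Order.succ_eq_add_one]
  exact menuPayoff_succ_le hc (hγ hi.2 hi'.2 (Nat.le_succ i)) hδk
    (hδ (hi.1.trans_lt hi.2) hi'.2 (hi.1.trans (Nat.le_succ i))) (hbind i hi'.2)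

end

theorem binding_adjacent_IC_sufficient_general
    (c : ℝ) (hc : 0 < c) (K : ℕ)
    (δ γ t : ℕ → ℝ)
    (hδpos : ∀ k, k < K → 0 < δ k)
    (hδmono : ∀ j k, j < k → k < K → δ j < δ k)
    (hγmono : ∀ j k, j ≤ k → k < K → γ j ≤ γ k)
    (hbind : ∀ k, 1 ≤ k → k < K →
      t k - t (k - 1) = c * (γ k - γ (k - 1)) / δ k) :
    ∀ k j, k < K → j < K →
      t k - c * γ k / δ k ≥ t j - c * γ j / δ k := by
  have hδ : MonotoneOn δ (Set.Iio K) := fun i _ j hj hij ↦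
    hij.eq_or_lt.elim (fun h ↦ h ▸ le_rfl) fun h ↦ (hδmono i j h hj).le
  have hγ : MonotoneOn γ (Set.Iio K) := fun i _ j hj hij ↦ hγmono i j hij hj
  have hbind' : ∀ i, i + 1 < K → t (i + 1) - t i = c * (γ (i + 1) - γ i) / δ (i + 1) :=
    fun i hi ↦ by simpa using hbind (i + 1) (Nat.le_add_left 1 i) hi
  intro k j hk hj
  change menuPayoff c δ γ t k j ≤ menuPayoff c δ γ t k k
  rcases le_or_gt j k with hjk | hkj
  · exact monotoneOn_menuPayoff hc.le hδ hγ hbind' hδpos hk hjk (le_refl k) hjk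
  · exact antitoneOn_menuPayoff hc.le hδ hγ hbind' (hδpos k hk)
      ⟨le_rfl, hk⟩ ⟨hkj.le, hj⟩ hkj.le

/-- Theorem 2, sufficiency: if `0 ≤ γ_0 ≤ ⋯ ≤ γ_{K-1}` and all the downward
adjacent incentive constraints are binding,
`t_k − t_{k−1} = c(γ_k − γ_{k−1})/δ_k`, then the menu is fully incentive
compatible: `t_k − cγ_k/δ_k ≥ t_j − cγ_j/δ_k` for all `k, j`. -/
theorem binding_adjacent_IC_sufficient
    (c : ℝ) (hc : 0 < c) (K : ℕ) (hK : 0 < K)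
    (δ γ t : ℕ → ℝ)
    (hδpos : ∀ k, k < K → 0 < δ k)
    (hδmono : ∀ j k, j < k → k < K → δ j < δ k)
    (hγ0 : ∀ k, k < K → 0 ≤ γ k)
    (hγmono : ∀ j k, j ≤ k → k < K → γ j ≤ γ k)
    (hbind : ∀ k, 1 ≤ k → k < K →
      t k - t (k - 1) = c * (γ k - γ (k - 1)) / δ k) :
    ∀ k j, k < K → j < K →
      t k - c * γ k / δ k ≥ t j - c * γ j / δ k :=
  binding_adjacent_IC_sufficient_general c hc K δ γ t hδpos hδmono hγmono hbind
end

section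
/- (Theorem 2, necessity.) Let c > 0 and types 0 < δ₁ < ⋯ < δ_K, and let (γ_k, t_k) be an incentive compatible and individually rational contract menu with 0 ≤ γ₁ ≤ ⋯ ≤ γ_K such that for at least one index k ≥ 2 the downward adjacent incentive constraint is slack: t_k − cγ_k/δ_k > t_{k−1} − cγ_{k−1}/δ_k. Then there exists another contract menu (γ_k, t′_k) with the same SNRs that is incentive compatible and individually rational, satisfies t′_k ≤ t_k for all k with strict inequality for at least one k, and in which every downward adjacent incentive constraint is binding. In particular the original menu is not optimal for the source. -/
/-!
Keep the SNRs and replace the transfers by the cheapest ones that make the lowest type's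
participation constraint and every downward adjacent incentive constraint bind. Since the SNRs
increase with the type and the cost `c γ / δ` of a higher SNR falls with the type, the
binding adjacent constraints imply all the others. An induction along the adjacent
constraints of the original menu shows the new transfers are pointwise smaller, and a slack
adjacent constraint makes them strictly smaller at its type.
-/

open Set

def IncentiveCompatible (c : ℝ) (δ γ t : ℕ → ℝ) (K : ℕ) : Prop :=
  ∀ k j, k < K → j < K → t k - c * γ k / δ k ≥ t j - c * γ j / δ k

def IndividuallyRational (c : ℝ) (δ γ t : ℕ → ℝ) (K : ℕ) : Prop :=
  ∀ k, k < K → t k - c * γ k / δ k ≥ 0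

noncomputable def bindingTransfer (c : ℝ) (δ γ : ℕ → ℝ) : ℕ → ℝ
  | 0 => c * γ 0 / δ 0
  | n + 1 => bindingTransfer c δ γ n + c * (γ (n + 1) - γ n) / δ (n + 1)

namespace bindingTransfer

variable {c : ℝ} {δ γ : ℕ → ℝ} {K : ℕ}

theorem sub_bounds (hc : 0 ≤ c) (hδ : ∀ k, k < K → 0 < δ k)
    (hδm : MonotoneOn δ (Iio K)) (hγm : MonotoneOn γ (Iio K))
    {j k : ℕ} (hjk : j ≤ k) (hk : k < K) :
    c * (γ k - γ j) / δ k ≤ bindingTransfer c δ γ k - bindingTransfer c δ γ j ∧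
      bindingTransfer c δ γ k - bindingTransfer c δ γ j ≤ c * (γ k - γ j) / δ j := by
  induction k, hjk using Nat.le_induction with
  | base => simp
  | succ k hjk ih =>
    obtain ⟨ihl, ihu⟩ := ih (by omega)
    have hj : 0 < δ j := hδ j (by omega)
    have hk' : 0 < δ (k + 1) := hδ (k + 1) hk
    have hγjk : 0 ≤ c * (γ k - γ j) :=
      mul_nonneg hc (sub_nonneg.2 (hγm (by simp; omega) (by simp; omega) hjk))
    have hγk : 0 ≤ c * (γ (k + 1) - γ k) :=
      mul_nonneg hc (sub_nonneg.2 (hγm (by simp; omega) (by simp; omega) k.le_succ))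
    have lower : c * (γ k - γ j) / δ (k + 1) ≤ c * (γ k - γ j) / δ k :=
      div_le_div_of_nonneg_left hγjk (hδ k (by omega)) (hδm (by simp; omega) hk k.le_succ)
    have upper : c * (γ (k + 1) - γ k) / δ (k + 1) ≤ c * (γ (k + 1) - γ k) / δ j :=
      div_le_div_of_nonneg_left hγk hj (hδm (by simp; omega) hk (by omega))
    simp only [bindingTransfer]
    constructor
    · calc c * (γ (k + 1) - γ j) / δ (k + 1)
            = c * (γ k - γ j) / δ (k + 1) + c * (γ (k + 1) - γ k) / δ (k + 1) := by ring
          _ ≤ _ := by linarith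
    · calc _ ≤ c * (γ k - γ j) / δ j + c * (γ (k + 1) - γ k) / δ j := by linarith
          _ = c * (γ (k + 1) - γ j) / δ j := by ring

theorem incentiveCompatible (hc : 0 ≤ c) (hδ : ∀ k, k < K → 0 < δ k)
    (hδm : MonotoneOn δ (Iio K)) (hγm : MonotoneOn γ (Iio K)) :
    IncentiveCompatible c δ γ (bindingTransfer c δ γ) K := by
  intro k j hk hj
  rcases le_total j k with hjk | hkj
  · have := (sub_bounds hc hδ hδm hγm hjk hk).1
    rw [mul_sub, sub_div] at this
    linarith
  · have := (sub_bounds hc hδ hδm hγm hkj hj).2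
    rw [mul_sub, sub_div] at this
    linarith

theorem individuallyRational (hc : 0 ≤ c) (hδ : ∀ k, k < K → 0 < δ k)
    (hδm : MonotoneOn δ (Iio K)) (hγm : MonotoneOn γ (Iio K)) (hγ0 : 0 ≤ γ 0) :
    IndividuallyRational c δ γ (bindingTransfer c δ γ) K := by
  intro k hk
  have hIC := incentiveCompatible hc hδ hδm hγm k 0 hk (by omega)
  have : c * γ 0 / δ k ≤ c * γ 0 / δ 0 :=
    div_le_div_of_nonneg_left (mul_nonneg hc hγ0) (hδ 0 (by omega))
      (hδm (by simp; omega) hk k.zero_le)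
  simp only [bindingTransfer] at hIC
  linarith

section Minimality

variable {t : ℕ → ℝ} (hIR₀ : t 0 - c * γ 0 / δ 0 ≥ 0)
  (hdown : ∀ n, n + 1 < K →
    t (n + 1) - c * γ (n + 1) / δ (n + 1) ≥ t n - c * γ n / δ (n + 1))
include hIR₀ hdown

theorem le : ∀ k, k < K → bindingTransfer c δ γ k ≤ t k
  | 0, _ => by simp only [bindingTransfer]; linarith
  | n + 1, hn => by
    have ih := le n (by omega)
    have := hdown n hn
    simp only [bindingTransfer]
    rw [mul_sub, sub_div]
    linarith

theorem lt_of_slack {n : ℕ} (hn : n + 1 < K)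
    (hslack : t (n + 1) - c * γ (n + 1) / δ (n + 1) > t n - c * γ n / δ (n + 1)) :
    bindingTransfer c δ γ (n + 1) < t (n + 1) := by
  have := le hIR₀ hdown n (by omega)
  simp only [bindingTransfer]
  rw [mul_sub, sub_div]
  linarith

end Minimality

theorem sub_pred {k : ℕ} (hk : 1 ≤ k) :
    bindingTransfer c δ γ k - bindingTransfer c δ γ (k - 1) = c * (γ k - γ (k - 1)) / δ k := by
  obtain ⟨n, rfl⟩ := Nat.exists_eq_add_of_le' hk
  simp [bindingTransfer]

end bindingTransfer

theorem slack_adjacent_IC_not_optimal_general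
    (c : ℝ) (hc : 0 < c) (K : ℕ)
    (δ γ t : ℕ → ℝ)
    (hδpos : ∀ k, k < K → 0 < δ k)
    (hδmono : ∀ j k, j < k → k < K → δ j < δ k)
    (hγ0 : ∀ k, k < K → 0 ≤ γ k)
    (hγmono : ∀ j k, j ≤ k → k < K → γ j ≤ γ k)
    (hIC : ∀ k j, k < K → j < K →
      t k - c * γ k / δ k ≥ t j - c * γ j / δ k)
    (hIR : ∀ k, k < K → t k - c * γ k / δ k ≥ 0)
    (hslack : ∃ k, 1 ≤ k ∧ k < K ∧
      t k - c * γ k / δ k > t (k - 1) - c * γ (k - 1) / δ k) :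
    ∃ t' : ℕ → ℝ,
      (∀ k j, k < K → j < K →
        t' k - c * γ k / δ k ≥ t' j - c * γ j / δ k) ∧
      (∀ k, k < K → t' k - c * γ k / δ k ≥ 0) ∧
      (∀ k, k < K → t' k ≤ t k) ∧
      (∃ k, k < K ∧ t' k < t k) ∧
      (∀ k, 1 ≤ k → k < K →
        t' k - t' (k - 1) = c * (γ k - γ (k - 1)) / δ k) := by
  obtain ⟨m, hm, hmK, hmslack⟩ := hslack
  obtain ⟨n, rfl⟩ := Nat.exists_eq_add_of_le' hm
  have hδm : MonotoneOn δ (Iio K) :=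
    StrictMonoOn.monotoneOn fun j _ k hk hjk => hδmono j k hjk hk
  have hγm : MonotoneOn γ (Iio K) := fun j _ k hk hjk => hγmono j k hjk hk
  have hIR₀ := hIR 0 (by omega)
  have hdown : ∀ n, n + 1 < K →
      t (n + 1) - c * γ (n + 1) / δ (n + 1) ≥ t n - c * γ n / δ (n + 1) :=
    fun n hn => hIC (n + 1) n hn (by omega)
  exact ⟨bindingTransfer c δ γ,
    bindingTransfer.incentiveCompatible hc.le hδpos hδm hγm,
    bindingTransfer.individuallyRational hc.le hδpos hδm hγm (hγ0 0 (by omega)),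
    bindingTransfer.le hIR₀ hdown,
    ⟨n + 1, hmK, bindingTransfer.lt_of_slack hIR₀ hdown hmK hmslack⟩,
    fun k hk _ => bindingTransfer.sub_pred hk⟩

/-- Theorem 2, necessity: if an IC and IR menu with `0 ≤ γ_0 ≤ ⋯ ≤ γ_{K-1}`
has a slack downward adjacent incentive constraint at some type, then there
is another IC and IR menu with the same SNRs, pointwise smaller transfers
(strictly smaller for at least one type), in which every downward adjacent
incentive constraint is binding; hence the original menu is not optimal. -/
theorem slack_adjacent_IC_not_optimal
    (c : ℝ) (hc : 0 < c) (K : ℕ) (hK : 0 < K)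
    (δ γ t : ℕ → ℝ)
    (hδpos : ∀ k, k < K → 0 < δ k)
    (hδmono : ∀ j k, j < k → k < K → δ j < δ k)
    (hγ0 : ∀ k, k < K → 0 ≤ γ k)
    (hγmono : ∀ j k, j ≤ k → k < K → γ j ≤ γ k)
    (hIC : ∀ k j, k < K → j < K →
      t k - c * γ k / δ k ≥ t j - c * γ j / δ k)
    (hIR : ∀ k, k < K → t k - c * γ k / δ k ≥ 0)
    (hslack : ∃ k, 1 ≤ k ∧ k < K ∧
      t k - c * γ k / δ k > t (k - 1) - c * γ (k - 1) / δ k) :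
    ∃ t' : ℕ → ℝ,
      (∀ k j, k < K → j < K →
        t' k - c * γ k / δ k ≥ t' j - c * γ j / δ k) ∧
      (∀ k, k < K → t' k - c * γ k / δ k ≥ 0) ∧
      (∀ k, k < K → t' k ≤ t k) ∧
      (∃ k, k < K ∧ t' k < t k) ∧
      (∀ k, 1 ≤ k → k < K →
        t' k - t' (k - 1) = c * (γ k - γ (k - 1)) / δ k) :=
  slack_adjacent_IC_not_optimal_general c hc K δ γ t hδpos hδmono hγ0 hγmono hIC hIR hslack
end
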